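/- For all N×N density matrices ρ and τ, the Hellinger distance between the corresponding probability densities satisfies h(p_ρ, p_τ) ≤ ‖ρ − τ‖₁^{1/2}. -/

import Mathlib

open MeasureTheory ComplexOrder

/-- The physicists' Hermite polynomials, defined by `H₀ = 1`,
`H_{k+1}(x) = 2x H_k(x) − H_k'(x)`. -/
noncomputable def physHermite : ℕ → Polynomial ℝ
  | 0 => 1
  | n + 1 => 2 * Polynomial.X * physHermite n - Polynomial.derivative (physHermite n)

/-- Normalizing constant `c_k = (√π 2^k k!)^{-1/2}` making `∫ ψ_k² = 1`. -/
noncomputable def hermiteConst (k : ℕ) : ℝ :=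
  1 / Real.sqrt (Real.sqrt Real.pi * 2 ^ k * (k.factorial : ℝ))

/-- The `k`-th Hermite function `ψ_k(x) = c_k H_k(x) e^{-x²/2}`. -/
noncomputable def hermiteFun (k : ℕ) (x : ℝ) : ℝ :=
  hermiteConst k * (physHermite k).eval x * Real.exp (-(x ^ 2) / 2)

/-- `p_A(x,φ) = (1/π) Σ_{j,k} A_{j,k} ψ_k(x) ψ_j(x) e^{−i(j−k)φ}`. -/
noncomputable def pFun {N : ℕ} (A : Matrix (Fin N) (Fin N) ℂ) (x φ : ℝ) : ℂ :=
  ((1 / Real.pi : ℝ) : ℂ) * ∑ j : Fin N, ∑ k : Fin N,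
    A j k * ((hermiteFun k x : ℝ) : ℂ) * ((hermiteFun j x : ℝ) : ℂ) *
      Complex.exp (-Complex.I * ((((j : ℕ) : ℂ)) - (((k : ℕ) : ℂ))) * (φ : ℂ))

/-- A density matrix: positive semidefinite with trace one. -/
def IsDensityMatrix {N : ℕ} (ρ : Matrix (Fin N) (Fin N) ℂ) : Prop :=
  ρ.PosSemidef ∧ ρ.trace = 1

/-- The trace norm of a Hermitian matrix: the sum of the absolute values of
its eigenvalues. -/
noncomputable def traceNorm {N : ℕ} (A : Matrix (Fin N) (Fin N) ℂ)
    (hA : A.IsHermitian) : ℝ :=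
  ∑ i, |hA.eigenvalues i|

/-! ### Hermite polynomial basics -/

theorem physHermite_succ (n : ℕ) : physHermite (n + 1) =
    2 * Polynomial.X * physHermite n - Polynomial.derivative (physHermite n) := rfl

theorem physHermite_zero : physHermite 0 = 1 := rfl

open Polynomial in
theorem physHermite_deriv (n : ℕ) :
    derivative (physHermite (n + 1)) = C ((2:ℝ) * (n + 1)) * physHermite n := by
  induction n with
  | zero =>
    rw [physHermite_succ]
    show derivative (2 * X * 1 - derivative 1) = C ((2:ℝ) * (↑(0:ℕ) + 1)) * 1
    simp [map_ofNat]
  | succ m ih =>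
    rw [physHermite_succ (m+1), derivative_sub, derivative_mul, ih]
    simp only [derivative_mul, derivative_C, derivative_X, derivative_ofNat]
    rw [physHermite_succ m]
    simp only [map_mul, map_add, map_one, map_ofNat, C_eq_natCast]
    push_cast
    ring

theorem integrable_pow_gauss (n : ℕ) :
    Integrable fun x : ℝ => x ^ n * Real.exp (-(x ^ 2)) := by
  have key : ∀ x : ℝ, |x ^ n * Real.exp (-(x ^ 2))| ≤
      (n.factorial * Real.exp (1/2)) * Real.exp (-(1/2) * x ^ 2) := by
    intro x
    rw [abs_mul, abs_pow, Real.abs_exp]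
    have h1 : |x| ^ n ≤ n.factorial * Real.exp |x| := by
      have := Real.pow_div_factorial_le_exp |x| (abs_nonneg x) n
      have hf : (0:ℝ) < n.factorial := by positivity
      calc |x| ^ n = (|x| ^ n / n.factorial) * n.factorial := by field_simp
        _ ≤ Real.exp |x| * n.factorial := by
            apply mul_le_mul_of_nonneg_right this hf.le
        _ = n.factorial * Real.exp |x| := mul_comm _ _
    have h2 : |x| ≤ x ^ 2 / 2 + 1 / 2 := by nlinarith [sq_nonneg (|x| - 1), sq_abs x]
    calc |x| ^ n * Real.exp (-(x^2))
        ≤ (n.factorial * Real.exp |x|) * Real.exp (-(x^2)) := by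
          apply mul_le_mul_of_nonneg_right h1 (Real.exp_nonneg _)
      _ ≤ (n.factorial * Real.exp (x^2/2 + 1/2)) * Real.exp (-(x^2)) := by
          have := Real.exp_le_exp.2 h2
          have hf : (0:ℝ) ≤ n.factorial := by positivity
          apply mul_le_mul_of_nonneg_right _ (Real.exp_nonneg _)
          exact mul_le_mul_of_nonneg_left this hf
      _ = (n.factorial * Real.exp (1/2)) * Real.exp (-(1/2) * x^2) := by
          rw [mul_assoc, ← Real.exp_add, mul_assoc, ← Real.exp_add]
          ring_nf
  have hi : Integrable fun x : ℝ => Real.exp (-(1/2 : ℝ) * x ^ 2) :=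
    integrable_exp_neg_mul_sq (by norm_num)
  have hm : AEStronglyMeasurable (fun x : ℝ => x ^ n * Real.exp (-(x ^ 2)))
      (volume : Measure ℝ) := by
    apply Continuous.aestronglyMeasurable
    fun_prop
  refine (hi.const_mul (n.factorial * Real.exp (1/2))).mono hm ?_
  · refine Filter.Eventually.of_forall fun x => ?_
    have := key x
    rwa [Real.norm_eq_abs, Real.norm_eq_abs, abs_of_nonneg (by positivity :
      (0:ℝ) ≤ (n.factorial * Real.exp (1/2)) * Real.exp (-(1/2) * x^2))]

theorem integrable_poly_gauss (P : Polynomial ℝ) :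
    Integrable fun x : ℝ => P.eval x * Real.exp (-(x ^ 2)) := by
  have : ∀ x : ℝ, P.eval x * Real.exp (-(x^2)) =
      ∑ i ∈ Finset.range (P.natDegree + 1), P.coeff i * (x ^ i * Real.exp (-(x^2))) := by
    intro x
    rw [Polynomial.eval_eq_sum_range, Finset.sum_mul]
    simp [mul_assoc]
  simp only [this]
  exact integrable_finset_sum _ fun i _ => (integrable_pow_gauss i).const_mul _

theorem hasDerivAt_hermiteGauss (n : ℕ) (x : ℝ) :
    HasDerivAt (fun y : ℝ => (physHermite n).eval y * Real.exp (-(y ^ 2)))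
      (-((physHermite (n+1)).eval x * Real.exp (-(x ^ 2)))) x := by
  have hP : HasDerivAt (fun y : ℝ => (physHermite n).eval y)
      ((Polynomial.derivative (physHermite n)).eval x) x := (physHermite n).hasDerivAt x
  have hE : HasDerivAt (fun y : ℝ => Real.exp (-(y ^ 2))) (-(2*x) * Real.exp (-(x^2))) x := by
    have h1 : HasDerivAt (fun y : ℝ => -(y ^ 2)) (-(2*x)) x := by
      simpa using (hasDerivAt_pow 2 x).fun_neg
    simpa [mul_comm] using h1.exp
  have := hP.fun_mul hE
  refine this.congr_deriv ?_
  rw [physHermite_succ]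
  simp only [Polynomial.eval_sub, Polynomial.eval_mul, Polynomial.eval_ofNat, Polynomial.eval_X]
  ring

theorem J_succ (j k : ℕ) :
    ∫ x : ℝ, (physHermite (j+1)).eval x * (physHermite k).eval x * Real.exp (-(x ^ 2))
    = ∫ x : ℝ, (Polynomial.derivative (physHermite k)).eval x * (physHermite j).eval x
        * Real.exp (-(x ^ 2)) := by
  have key := MeasureTheory.integral_mul_deriv_eq_deriv_mul_of_integrable
    (u := fun x : ℝ => (physHermite k).eval x)
    (u' := fun x : ℝ => (Polynomial.derivative (physHermite k)).eval x)
    (v := fun x : ℝ => (physHermite j).eval x * Real.exp (-(x ^ 2)))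
    (v' := fun x : ℝ => -((physHermite (j+1)).eval x * Real.exp (-(x ^ 2))))
    (fun x _ => (physHermite k).hasDerivAt x)
    (fun x _ => hasDerivAt_hermiteGauss j x)
    (by
      have := (integrable_poly_gauss (physHermite k * physHermite (j+1))).neg
      refine this.congr (Filter.Eventually.of_forall fun x => ?_)
      simp [Polynomial.eval_mul]; ring)
    (by
      have := integrable_poly_gauss (Polynomial.derivative (physHermite k) * physHermite j)
      refine this.congr (Filter.Eventually.of_forall fun x => ?_)
      simp [Polynomial.eval_mul]; ring)
    (by
      have := integrable_poly_gauss (physHermite k * physHermite j)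
      refine this.congr (Filter.Eventually.of_forall fun x => ?_)
      simp [Polynomial.eval_mul]; ring)
  have l1 : ∫ x : ℝ, (physHermite k).eval x *
      (-((physHermite (j+1)).eval x * Real.exp (-(x ^ 2)))) =
      - ∫ x : ℝ, (physHermite (j+1)).eval x * (physHermite k).eval x * Real.exp (-(x ^ 2)) := by
    rw [← MeasureTheory.integral_neg]
    congr 1; funext x; ring
  have l2 : ∫ x : ℝ, (Polynomial.derivative (physHermite k)).eval x *
      ((physHermite j).eval x * Real.exp (-(x ^ 2))) =
      ∫ x : ℝ, (Polynomial.derivative (physHermite k)).eval x * (physHermite j).eval x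
        * Real.exp (-(x ^ 2)) := by
    congr 1; funext x; ring
  rw [l1, l2] at key
  linarith [key]

theorem J_eval (j k : ℕ) :
    ∫ x : ℝ, (physHermite j).eval x * (physHermite k).eval x * Real.exp (-(x ^ 2))
    = if j = k then Real.sqrt Real.pi * 2 ^ j * (j.factorial : ℝ) else 0 := by
  induction j generalizing k with
  | zero =>
    induction k with
    | zero =>
      simp only [physHermite_zero, Polynomial.eval_one, one_mul]
      have := integral_gaussian 1
      simp only [neg_mul, one_mul] at this
      rw [this]
      norm_num
    | succ m _ =>
      have hsymm : ∫ x : ℝ, (physHermite 0).eval x * (physHermite (m+1)).eval x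
          * Real.exp (-(x ^ 2)) = ∫ x : ℝ, (physHermite (m+1)).eval x * (physHermite 0).eval x
          * Real.exp (-(x ^ 2)) := by congr 1; funext x; ring
      rw [hsymm, J_succ m 0]
      simp only [physHermite_zero, Polynomial.derivative_one, Polynomial.eval_zero, zero_mul,
        integral_zero]
      simp
  | succ n ih =>
    rw [J_succ n k]
    cases k with
    | zero =>
      simp only [physHermite_zero, Polynomial.derivative_one, Polynomial.eval_zero, zero_mul,
        integral_zero]
      simp
    | succ m =>
      rw [physHermite_deriv m]
      have : ∫ x : ℝ, (Polynomial.C ((2:ℝ)*(m+1)) * physHermite m).eval x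
          * (physHermite n).eval x * Real.exp (-(x^2))
          = (2*(m+1)) * ∫ x : ℝ, (physHermite m).eval x * (physHermite n).eval x
            * Real.exp (-(x^2)) := by
        rw [← MeasureTheory.integral_const_mul]
        congr 1; funext x; simp [Polynomial.eval_mul]; ring
      rw [this]
      have hsymm : ∫ x : ℝ, (physHermite m).eval x * (physHermite n).eval x * Real.exp (-(x^2))
          = ∫ x : ℝ, (physHermite n).eval x * (physHermite m).eval x * Real.exp (-(x^2)) := by
        congr 1; funext x; ring
      rw [hsymm, ih m]
      by_cases h : n = m
      · subst h
        simp [Nat.factorial_succ]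
        ring
      · simp [h, fun hh => h (Nat.succ_injective hh)]

/-! ### Hermite functions -/

@[fun_prop]
theorem continuous_hermiteFun (k : ℕ) : Continuous (hermiteFun k) := by
  unfold hermiteFun
  fun_prop

theorem hermiteFun_mul (j k : ℕ) (x : ℝ) :
    hermiteFun j x * hermiteFun k x =
    (hermiteConst j * hermiteConst k) *
      ((physHermite j * physHermite k).eval x * Real.exp (-(x ^ 2))) := by
  unfold hermiteFun
  rw [Polynomial.eval_mul]
  rw [show Real.exp (-(x^2)) = Real.exp (-(x^2)/2) * Real.exp (-(x^2)/2) by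
    rw [← Real.exp_add]; ring_nf]
  ring

theorem integrable_hermiteFun_mul (j k : ℕ) :
    Integrable fun x : ℝ => hermiteFun j x * hermiteFun k x := by
  simp only [hermiteFun_mul]
  exact (integrable_poly_gauss (physHermite j * physHermite k)).const_mul _

theorem hermiteConst_sq (k : ℕ) :
    hermiteConst k ^ 2 * (Real.sqrt Real.pi * 2 ^ k * (k.factorial : ℝ)) = 1 := by
  unfold hermiteConst
  have hd : (0:ℝ) < Real.sqrt Real.pi * 2 ^ k * (k.factorial : ℝ) := by
    have : (0:ℝ) < Real.sqrt Real.pi := Real.sqrt_pos.2 Real.pi_pos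
    positivity
  rw [div_pow, one_pow, Real.sq_sqrt hd.le]
  field_simp

theorem integral_hermiteFun_mul (j k : ℕ) :
    ∫ x : ℝ, hermiteFun j x * hermiteFun k x = if j = k then 1 else 0 := by
  simp only [hermiteFun_mul]
  rw [MeasureTheory.integral_const_mul]
  have : ∫ x : ℝ, (physHermite j * physHermite k).eval x * Real.exp (-(x ^ 2))
      = ∫ x : ℝ, (physHermite j).eval x * (physHermite k).eval x * Real.exp (-(x ^ 2)) := by
    congr 1; funext x; rw [Polynomial.eval_mul]
  rw [this, J_eval]
  by_cases h : j = k
  · subst h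
    rw [if_pos rfl, if_pos rfl, ← sq]
    exact hermiteConst_sq j
  · rw [if_neg h, if_neg h, mul_zero]

/-! ### The `g` sums and their properties -/

noncomputable def gsum {N : ℕ} (U : Matrix (Fin N) (Fin N) ℂ) (i : Fin N) (φ x : ℝ) : ℂ :=
  ∑ j : Fin N, U j i * ((hermiteFun j x : ℝ) : ℂ) *
    Complex.exp (-Complex.I * ((j : ℕ) : ℂ) * (φ : ℂ))

theorem gsum_mul_conj {N : ℕ} (U : Matrix (Fin N) (Fin N) ℂ) (i : Fin N) (φ x : ℝ) :
    gsum U i φ x * (starRingEnd ℂ) (gsum U i φ x) =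
    ∑ j : Fin N, ∑ k : Fin N, U j i * (starRingEnd ℂ) (U k i) *
      ((hermiteFun k x : ℝ) : ℂ) * ((hermiteFun j x : ℝ) : ℂ) *
      Complex.exp (-Complex.I * ((((j : ℕ) : ℂ)) - (((k : ℕ) : ℂ))) * (φ : ℂ)) := by
  rw [gsum, map_sum, Finset.sum_mul_sum]
  refine Finset.sum_congr rfl fun j _ => Finset.sum_congr rfl fun k _ => ?_
  simp only [map_mul, Complex.conj_ofReal, ← Complex.exp_conj, map_neg, Complex.conj_I,
    map_natCast]
  rw [show -Complex.I * ((((j : ℕ) : ℂ)) - (((k : ℕ) : ℂ))) * (φ : ℂ) =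
    (-Complex.I * ((j : ℕ) : ℂ) * (φ : ℂ)) + (- -Complex.I * ((k : ℕ) : ℂ) * (φ : ℂ)) by ring,
    Complex.exp_add]
  ring

theorem pFun_decomp {N : ℕ} (A : Matrix (Fin N) (Fin N) ℂ) (U : Matrix (Fin N) (Fin N) ℂ)
    (lam : Fin N → ℝ)
    (hA : ∀ j k, A j k = ∑ i, U j i * (lam i : ℂ) * (starRingEnd ℂ) (U k i)) (x φ : ℝ) :
    pFun A x φ = ((1 / Real.pi : ℝ) : ℂ) * ∑ i : Fin N, (lam i : ℂ) *
      (gsum U i φ x * (starRingEnd ℂ) (gsum U i φ x)) := by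
  rw [pFun]
  congr 1
  simp only [gsum_mul_conj, Finset.mul_sum]
  calc (∑ j : Fin N, ∑ k : Fin N, A j k * ((hermiteFun k x : ℝ) : ℂ) *
        ((hermiteFun j x : ℝ) : ℂ) *
        Complex.exp (-Complex.I * ((((j : ℕ) : ℂ)) - (((k : ℕ) : ℂ))) * (φ : ℂ)))
      = ∑ j : Fin N, ∑ k : Fin N, ∑ i : Fin N, (lam i : ℂ) *
          (U j i * (starRingEnd ℂ) (U k i) * ((hermiteFun k x : ℝ) : ℂ) *
          ((hermiteFun j x : ℝ) : ℂ) *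
          Complex.exp (-Complex.I * ((((j : ℕ) : ℂ)) - (((k : ℕ) : ℂ))) * (φ : ℂ))) := by
        refine Finset.sum_congr rfl fun j _ => Finset.sum_congr rfl fun k _ => ?_
        rw [hA j k]
        simp only [Finset.sum_mul]
        exact Finset.sum_congr rfl fun i _ => by ring
    _ = ∑ j : Fin N, ∑ i : Fin N, ∑ k : Fin N, (lam i : ℂ) *
          (U j i * (starRingEnd ℂ) (U k i) * ((hermiteFun k x : ℝ) : ℂ) *
          ((hermiteFun j x : ℝ) : ℂ) *
          Complex.exp (-Complex.I * ((((j : ℕ) : ℂ)) - (((k : ℕ) : ℂ))) * (φ : ℂ))) :=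
        Finset.sum_congr rfl fun j _ => Finset.sum_comm
    _ = ∑ i : Fin N, ∑ j : Fin N, ∑ k : Fin N, (lam i : ℂ) *
          (U j i * (starRingEnd ℂ) (U k i) * ((hermiteFun k x : ℝ) : ℂ) *
          ((hermiteFun j x : ℝ) : ℂ) *
          Complex.exp (-Complex.I * ((((j : ℕ) : ℂ)) - (((k : ℕ) : ℂ))) * (φ : ℂ))) :=
        Finset.sum_comm

theorem normSq_gsum_eq_sum {N : ℕ} (U : Matrix (Fin N) (Fin N) ℂ) (i : Fin N) (φ x : ℝ) :
    Complex.normSq (gsum U i φ x) = ∑ j : Fin N, ∑ k : Fin N,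
      (U j i * (starRingEnd ℂ) (U k i) *
        Complex.exp (-Complex.I * ((((j : ℕ) : ℂ)) - (((k : ℕ) : ℂ))) * (φ : ℂ))).re *
      (hermiteFun k x * hermiteFun j x) := by
  have h := congrArg Complex.re (gsum_mul_conj U i φ x)
  rw [Complex.mul_conj, Complex.ofReal_re] at h
  rw [h, Complex.re_sum]
  refine Finset.sum_congr rfl fun j _ => ?_
  rw [Complex.re_sum]
  refine Finset.sum_congr rfl fun k _ => ?_
  have : U j i * (starRingEnd ℂ) (U k i) * ((hermiteFun k x : ℝ) : ℂ) *
      ((hermiteFun j x : ℝ) : ℂ) *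
      Complex.exp (-Complex.I * ((((j : ℕ) : ℂ)) - (((k : ℕ) : ℂ))) * (φ : ℂ)) =
      (U j i * (starRingEnd ℂ) (U k i) *
        Complex.exp (-Complex.I * ((((j : ℕ) : ℂ)) - (((k : ℕ) : ℂ))) * (φ : ℂ))) *
      (((hermiteFun k x * hermiteFun j x : ℝ) : ℂ)) := by
    push_cast; ring
  rw [this, Complex.mul_re, Complex.ofReal_re, Complex.ofReal_im, mul_zero, sub_zero]

theorem integrable_normSq_gsum {N : ℕ} (U : Matrix (Fin N) (Fin N) ℂ) (i : Fin N) (φ : ℝ) :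
    Integrable fun x : ℝ => Complex.normSq (gsum U i φ x) := by
  simp only [normSq_gsum_eq_sum]
  refine integrable_finset_sum _ fun j _ => integrable_finset_sum _ fun k _ => ?_
  exact (integrable_hermiteFun_mul k j).const_mul _

theorem integral_normSq_gsum {N : ℕ} (U : Matrix (Fin N) (Fin N) ℂ) (i : Fin N) (φ : ℝ)
    (hU : ∑ j : Fin N, Complex.normSq (U j i) = 1) :
    ∫ x : ℝ, Complex.normSq (gsum U i φ x) = 1 := by
  simp only [normSq_gsum_eq_sum]
  rw [integral_finset_sum _ fun j _ => integrable_finset_sum _ fun k _ =>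
    (integrable_hermiteFun_mul _ _).const_mul _]
  have : ∀ j : Fin N, (∫ x : ℝ, ∑ k : Fin N,
      (U j i * (starRingEnd ℂ) (U k i) *
        Complex.exp (-Complex.I * ((((j : ℕ) : ℂ)) - (((k : ℕ) : ℂ))) * (φ : ℂ))).re *
      (hermiteFun k x * hermiteFun j x)) = Complex.normSq (U j i) := by
    intro j
    rw [integral_finset_sum _ fun k _ => (integrable_hermiteFun_mul _ _).const_mul _]
    have step : ∀ k : Fin N, (∫ x : ℝ,
        (U j i * (starRingEnd ℂ) (U k i) *
          Complex.exp (-Complex.I * ((((j : ℕ) : ℂ)) - (((k : ℕ) : ℂ))) * (φ : ℂ))).re *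
        (hermiteFun k x * hermiteFun j x)) =
        if (k : ℕ) = (j : ℕ) then
          (U j i * (starRingEnd ℂ) (U k i) *
            Complex.exp (-Complex.I * ((((j : ℕ) : ℂ)) - (((k : ℕ) : ℂ))) * (φ : ℂ))).re
        else 0 := by
      intro k
      rw [MeasureTheory.integral_const_mul, integral_hermiteFun_mul]
      split_ifs with h <;> simp
    rw [Finset.sum_congr rfl fun k _ => step k]
    simp only [Fin.val_inj]
    rw [Finset.sum_ite_eq' Finset.univ j (fun k => (U j i * (starRingEnd ℂ) (U k i) *
      Complex.exp (-Complex.I * ((((j : ℕ) : ℂ)) - (((k : ℕ) : ℂ))) * (φ : ℂ))).re)]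
    simp [Complex.mul_conj]
  rw [Finset.sum_congr rfl fun j _ => this j, hU]

theorem normSq_gsum_le {N : ℕ} (U : Matrix (Fin N) (Fin N) ℂ) (i : Fin N) (φ x : ℝ)
    (hU : ∑ j : Fin N, Complex.normSq (U j i) = 1) :
    Complex.normSq (gsum U i φ x) ≤ ∑ j : Fin N, (hermiteFun j x) ^ 2 := by
  have habs : ‖gsum U i φ x‖ ≤
      ∑ j : Fin N, ‖U j i‖ * |hermiteFun j x| := by
    rw [gsum]
    refine (norm_sum_le (Finset.univ : Finset (Fin N)) _).trans ?_
    refine Finset.sum_le_sum fun j _ => ?_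
    rw [norm_mul, norm_mul]
    have he : ‖Complex.exp (-Complex.I * ((j : ℕ) : ℂ) * (φ : ℂ))‖ = 1 := by
      rw [Complex.norm_exp]
      norm_num [Complex.mul_re, Complex.mul_im]
    rw [he, mul_one]
    simp
  have h2 : (∑ j : Fin N, ‖U j i‖ * |hermiteFun j x|) ^ 2 ≤
      (∑ j : Fin N, ‖U j i‖ ^ 2) * ∑ j : Fin N, |hermiteFun j x| ^ 2 :=
    Finset.sum_mul_sq_le_sq_mul_sq _ _ _
  have h3 : (∑ j : Fin N, ‖U j i‖ ^ 2) = 1 := by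
    rw [← hU]; exact Finset.sum_congr rfl fun j _ => Complex.sq_norm _
  have h4 : (∑ j : Fin N, |hermiteFun j x| ^ 2) = ∑ j : Fin N, (hermiteFun j x) ^ 2 :=
    Finset.sum_congr rfl fun j _ => sq_abs _
  calc Complex.normSq (gsum U i φ x) = ‖gsum U i φ x‖ ^ 2 :=
        (Complex.sq_norm _).symm
    _ ≤ (∑ j : Fin N, ‖U j i‖ * |hermiteFun j x|) ^ 2 := by
        apply pow_le_pow_left₀ (norm_nonneg _) habs
    _ ≤ 1 * ∑ j : Fin N, (hermiteFun j x) ^ 2 := by rw [← h3, ← h4]; exact h2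
    _ = _ := one_mul _

theorem sqrt_sub_sq_le_abs (a b : ℝ) : (Real.sqrt a - Real.sqrt b) ^ 2 ≤ |a - b| := by
  have key : ∀ u v : ℝ, v ≤ u → (Real.sqrt u - Real.sqrt v) ^ 2 ≤ |u - v| := by
    intro u v huv
    rcases le_or_gt 0 v with hv | hv
    · have hu : 0 ≤ u := hv.trans huv
      rw [abs_of_nonneg (sub_nonneg.2 huv)]
      have hsle := Real.sqrt_le_sqrt huv
      nlinarith [Real.sq_sqrt hu, Real.sq_sqrt hv, Real.sqrt_nonneg v, Real.sqrt_nonneg u]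
    · have hsv : Real.sqrt v = 0 := Real.sqrt_eq_zero_of_nonpos hv.le
      rcases le_or_gt 0 u with hu | hu
      · rw [hsv, sub_zero, Real.sq_sqrt hu, abs_of_nonneg (sub_nonneg.2 huv)]
        linarith
      · have hsu : Real.sqrt u = 0 := Real.sqrt_eq_zero_of_nonpos hu.le
        rw [hsu, hsv]
        simp [abs_nonneg]
  rcases le_total b a with h | h
  · exact key a b h
  · rw [show (Real.sqrt a - Real.sqrt b) ^ 2 = (Real.sqrt b - Real.sqrt a) ^ 2 by ring,
      abs_sub_comm]
    exact key b a h

theorem pFun_sub {N : ℕ} (A B : Matrix (Fin N) (Fin N) ℂ) (x φ : ℝ) :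
    pFun (A - B) x φ = pFun A x φ - pFun B x φ := by
  simp only [pFun, Matrix.sub_apply, sub_mul, Finset.sum_sub_distrib, mul_sub]

@[fun_prop]
theorem continuous_pFun_x {N : ℕ} (A : Matrix (Fin N) (Fin N) ℂ) (φ : ℝ) :
    Continuous fun x : ℝ => pFun A x φ := by
  unfold pFun
  fun_prop

@[fun_prop]
theorem continuous_pFun_phi {N : ℕ} (A : Matrix (Fin N) (Fin N) ℂ) (x : ℝ) :
    Continuous fun φ : ℝ => pFun A x φ := by
  unfold pFun
  fun_prop

/-- for all `N×N` density matrices `ρ` and `τ`, the Hellinger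
distance between the corresponding probability densities satisfies
`h(p_ρ, p_τ) ≤ ‖ρ − τ‖₁^{1/2}`. -/
theorem hellinger_le_sqrt_traceNorm (N : ℕ) (ρ τ : Matrix (Fin N) (Fin N) ℂ)
    (hρ : IsDensityMatrix ρ) (hτ : IsDensityMatrix τ) :
    Real.sqrt (∫ φ in (0:ℝ)..Real.pi, ∫ x : ℝ,
        (Real.sqrt (pFun ρ x φ).re - Real.sqrt (pFun τ x φ).re) ^ 2) ≤
      Real.sqrt (traceNorm (ρ - τ) (hρ.1.isHermitian.sub hτ.1.isHermitian)) := by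
  have hπ : (0:ℝ) < Real.pi := Real.pi_pos
  set hΔ : (ρ - τ).IsHermitian := hρ.1.isHermitian.sub hτ.1.isHermitian with hΔdef
  set U : Matrix (Fin N) (Fin N) ℂ := (hΔ.eigenvectorUnitary : Matrix (Fin N) (Fin N) ℂ)
    with hUdef
  set lam : Fin N → ℝ := hΔ.eigenvalues with hlamdef
  -- spectral decomposition, entrywise
  have hspec : ∀ j k, (ρ - τ) j k = ∑ i, U j i * (lam i : ℂ) * (starRingEnd ℂ) (U k i) := by
    intro j k
    conv_lhs => rw [hΔ.spectral_theorem]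
    rw [Unitary.conjStarAlgAut_apply]
    rw [Matrix.mul_apply]
    refine Finset.sum_congr rfl fun i _ => ?_
    rw [Matrix.mul_diagonal, Matrix.star_apply]
    rfl
  -- columns of U are normalized
  have hUcol : ∀ i, ∑ j : Fin N, Complex.normSq (U j i) = 1 := by
    intro i
    have h1 : star U * U = 1 := by
      have := hΔ.eigenvectorUnitary.2
      rw [Matrix.mem_unitaryGroup_iff'] at this
      exact this
    have h2 := congrArg (fun M => (M i i).re) h1
    simp only [Matrix.mul_apply, Matrix.star_apply, Matrix.one_apply_eq] at h2
    rw [Complex.re_sum] at h2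
    simp only [Complex.one_re] at h2
    rw [← h2]
    refine Finset.sum_congr rfl fun j _ => ?_
    rw [show (star (U j i)) * U j i = (starRingEnd ℂ) (U j i) * U j i from rfl]
    rw [mul_comm, Complex.mul_conj, Complex.ofReal_re]
  -- the real part of pFun (ρ - τ)
  have hre : ∀ x φ : ℝ, (pFun (ρ - τ) x φ).re =
      (1 / Real.pi) * ∑ i : Fin N, lam i * Complex.normSq (gsum U i φ x) := by
    intro x φ
    rw [pFun_decomp (ρ - τ) U lam hspec x φ]
    simp only [Complex.mul_conj]
    rw [show (∑ i : Fin N, (lam i : ℂ) * ((Complex.normSq (gsum U i φ x) : ℝ) : ℂ))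
        = ((∑ i : Fin N, lam i * Complex.normSq (gsum U i φ x) : ℝ) : ℂ) by push_cast; rfl]
    rw [← Complex.ofReal_mul, Complex.ofReal_re]
  -- bound chain setup
  set S : ℝ → ℝ := fun x => ∑ j : Fin N, (hermiteFun j x) ^ 2 with hSdef
  set M : ℝ → ℝ → ℝ := fun φ x =>
    ∑ i : Fin N, (1 / Real.pi * |lam i|) * Complex.normSq (gsum U i φ x) with hMdef
  set B : ℝ → ℝ := fun x => (∑ i : Fin N, (1 / Real.pi * |lam i|)) * S x with hBdef
  set F : ℝ → ℝ → ℝ := fun φ x =>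
    (Real.sqrt (pFun ρ x φ).re - Real.sqrt (pFun τ x φ).re) ^ 2 with hFdef
  have hS_int : Integrable S := by
    refine integrable_finset_sum _ fun j _ => ?_
    have := integrable_hermiteFun_mul j j
    refine this.congr (Filter.Eventually.of_forall fun x => ?_)
    exact (sq (hermiteFun j x)).symm
  have hB_int : Integrable B := hS_int.const_mul _
  have hM_int : ∀ φ, Integrable (M φ) := fun φ =>
    integrable_finset_sum _ fun i _ => (integrable_normSq_gsum U i φ).const_mul _
  have hFM : ∀ φ x, F φ x ≤ M φ x := by
    intro φ x
    refine (sqrt_sub_sq_le_abs _ _).trans ?_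
    rw [show (pFun ρ x φ).re - (pFun τ x φ).re = (pFun (ρ - τ) x φ).re by
      rw [pFun_sub]; simp [Complex.sub_re]]
    rw [hre x φ]
    rw [abs_mul]
    rw [abs_of_nonneg (by positivity : (0:ℝ) ≤ 1 / Real.pi)]
    calc 1 / Real.pi * |∑ i : Fin N, lam i * Complex.normSq (gsum U i φ x)|
        ≤ 1 / Real.pi * ∑ i : Fin N, |lam i * Complex.normSq (gsum U i φ x)| := by
          apply mul_le_mul_of_nonneg_left (Finset.abs_sum_le_sum_abs _ _) (by positivity)
      _ = ∑ i : Fin N, (1 / Real.pi * |lam i|) * Complex.normSq (gsum U i φ x) := by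
          rw [Finset.mul_sum]
          refine Finset.sum_congr rfl fun i _ => ?_
          rw [abs_mul, abs_of_nonneg (Complex.normSq_nonneg _)]
          ring
  have hMB : ∀ φ x, M φ x ≤ B x := by
    intro φ x
    simp only [hMdef, hBdef, hSdef, Finset.sum_mul]
    refine Finset.sum_le_sum fun i _ => ?_
    exact mul_le_mul_of_nonneg_left (normSq_gsum_le U i φ x (hUcol i)) (by positivity)
  have hF_nonneg : ∀ φ x, 0 ≤ F φ x := fun φ x => sq_nonneg _
  have hF_cont_x : ∀ φ, Continuous fun x => F φ x := by
    intro φ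
    rw [hFdef]
    fun_prop
  have hF_int : ∀ φ, Integrable (F φ) := by
    intro φ
    refine hB_int.mono ((hF_cont_x φ).aestronglyMeasurable) ?_
    refine Filter.Eventually.of_forall fun x => ?_
    rw [Real.norm_eq_abs, Real.norm_eq_abs, abs_of_nonneg (hF_nonneg φ x)]
    exact ((hFM φ x).trans (hMB φ x)).trans (le_abs_self _)
  -- inner integral bound
  have hInner : ∀ φ, (∫ x : ℝ, F φ x) ≤
      traceNorm (ρ - τ) hΔ / Real.pi := by
    intro φ
    have h1 : (∫ x : ℝ, F φ x) ≤ ∫ x : ℝ, M φ x :=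
      integral_mono (hF_int φ) (hM_int φ) (fun x => hFM φ x)
    have h2 : (∫ x : ℝ, M φ x) = ∑ i : Fin N, (1 / Real.pi * |lam i|) := by
      rw [hMdef]
      rw [integral_finset_sum _ fun i _ => (integrable_normSq_gsum U i φ).const_mul _]
      refine Finset.sum_congr rfl fun i _ => ?_
      rw [MeasureTheory.integral_const_mul, integral_normSq_gsum U i φ (hUcol i), mul_one]
    rw [h2] at h1
    refine h1.trans_eq ?_
    rw [traceNorm, Finset.sum_div]
    exact Finset.sum_congr rfl fun i _ => by ring
  -- continuity of the inner integral in φ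
  have hf_cont : Continuous fun φ => ∫ x : ℝ, F φ x := by
    refine continuous_of_dominated (fun φ => (hF_cont_x φ).aestronglyMeasurable) ?_ hB_int ?_
    · intro φ
      refine Filter.Eventually.of_forall fun x => ?_
      rw [Real.norm_eq_abs, abs_of_nonneg (hF_nonneg φ x)]
      exact (hFM φ x).trans (hMB φ x)
    · refine Filter.Eventually.of_forall fun x => ?_
      rw [hFdef]
      fun_prop
  -- putting it together
  have hIneq : (∫ φ in (0:ℝ)..Real.pi, ∫ x : ℝ, F φ x) ≤ traceNorm (ρ - τ) hΔ := by
    have hconst : (∫ φ in (0:ℝ)..Real.pi, traceNorm (ρ - τ) hΔ / Real.pi)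
        = traceNorm (ρ - τ) hΔ := by
      rw [intervalIntegral.integral_const, smul_eq_mul, sub_zero]
      field_simp
    calc (∫ φ in (0:ℝ)..Real.pi, ∫ x : ℝ, F φ x)
        ≤ ∫ φ in (0:ℝ)..Real.pi, traceNorm (ρ - τ) hΔ / Real.pi := by
          apply intervalIntegral.integral_mono_on hπ.le
            (hf_cont.intervalIntegrable 0 Real.pi) intervalIntegrable_const
          exact fun φ _ => hInner φ
      _ = traceNorm (ρ - τ) hΔ := hconst
  exact Real.sqrt_le_sqrt hIneq
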